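/- Let r ∈ ℤ, s = 1+r, z = t(1+(1-s)t)^{1-s}, v = t(1-rt)^{-1}, w = v(1+v)^{r²-1}, all in ℚ[[t]]. Then f_r(w) = W_s(z)^{-4s}·X_s(z)², where f_r(w) = (1+v)^{r²}(1+r²v)^{-1}, W_s(z) = (1+(1-s)t)^{(s/2)-1}(1+(2-s)t)^{(1-s)/2}, and X_s(z) = (1+(1-s)t)^{(s²/2)-s}(1+(2-s)t)^{(-s²+1)/2}(1+(1-s)(2-s)t)^{-1/2}. -/

import Mathlib

/-
With `A = 1 - r t = 1 + (1 - s) t`, `B = A + t` and `C = A + r² t`, both sides are monomials in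
`A`, `B`, `C`: the left side is `A^(1-r²) B^(r²) C⁻¹` and the right side is
`A^(2s-s²) B^((s-1)²) C⁻¹`, so they agree because `s - 1 = r`. The half-integer powers cancel
since only `W⁴ = (W²)²` and `X²` occur. Every factor has constant term `1`, hence is a unit.
-/

/-- The formal variable `t`, as an element of the field `ℚ((t))` of Laurent series. -/
noncomputable def tVar : LaurentSeries ℚ := HahnSeries.single 1 1

theorem one_add_intCast_mul_tVar_ne_zero (a : ℤ) : 1 + (a : LaurentSeries ℚ) * tVar ≠ 0 := by
  rw [← map_intCast (HahnSeries.C : ℚ →+* LaurentSeries ℚ), HahnSeries.C_apply]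
  intro h
  have h0 := congrArg (fun f : LaurentSeries ℚ => f.coeff 0) h
  simp [tVar, HahnSeries.single_mul_single] at h0

section Field

variable {K : Type*} [Field K]

theorem one_add_mul_inv_zpow_mul_inv {A : K} (hA : A ≠ 0) (t c : K) (n : ℤ) :
    (1 + t * A⁻¹) ^ n * (1 + c * (t * A⁻¹))⁻¹ = A ^ (1 - n) * (A + t) ^ n * (A + c * t)⁻¹ := by
  have hAt : 1 + t * A⁻¹ = (A + t) * A⁻¹ := by field_simp
  have hAct : 1 + c * (t * A⁻¹) = (A + c * t) * A⁻¹ := by field_simp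
  rw [hAt, hAct, mul_zpow, inv_zpow', mul_inv, inv_inv, sub_eq_neg_add, zpow_add_one₀ hA]
  ring

theorem zpow_neg_four_mul_mul_sq_of_sq_eq {A B C W X : K} (hA : A ≠ 0) (hB : B ≠ 0) (s : ℤ)
    (hW : W ^ 2 = A ^ (s - 2) * B ^ (1 - s))
    (hX : X ^ 2 = A ^ (s ^ 2 - 2 * s) * B ^ (1 - s ^ 2) * C⁻¹) :
    W ^ (-(4 * s)) * X ^ 2 = A ^ (2 * s - s ^ 2) * B ^ ((s - 1) ^ 2) * C⁻¹ := by
  have hW4 : W ^ (-(4 * s)) = (W ^ 2) ^ (-(2 * s)) := by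
    rw [← zpow_natCast W 2, ← zpow_mul]
    ring_nf
  rw [hW4, hW, hX, mul_zpow, ← zpow_mul, ← zpow_mul]
  calc A ^ ((s - 2) * -(2 * s)) * B ^ ((1 - s) * -(2 * s)) *
        (A ^ (s ^ 2 - 2 * s) * B ^ (1 - s ^ 2) * C⁻¹)
      = A ^ ((s - 2) * -(2 * s) + (s ^ 2 - 2 * s)) *
          B ^ ((1 - s) * -(2 * s) + (1 - s ^ 2)) * C⁻¹ := by
        rw [zpow_add₀ hA, zpow_add₀ hB]; ring
    _ = A ^ (2 * s - s ^ 2) * B ^ ((s - 1) ^ 2) * C⁻¹ := by ring_nf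

end Field

/-- The half-integer powers `W_s` and `X_s` are specified by their squares, and all series are
expanded in `t`, working in the field `ℚ((t))` of Laurent series. -/
theorem rank_one_segre_verlinde_f (r s : ℤ) (hs : s = 1 + r) (W X : LaurentSeries ℚ)
    (hW : W ^ 2 = (1 + (1 - (s : LaurentSeries ℚ)) * tVar) ^ (s - 2) *
        (1 + (2 - (s : LaurentSeries ℚ)) * tVar) ^ (1 - s))
    (hX : X ^ 2 = (1 + (1 - (s : LaurentSeries ℚ)) * tVar) ^ (s ^ 2 - 2 * s) *
        (1 + (2 - (s : LaurentSeries ℚ)) * tVar) ^ (1 - s ^ 2) *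
        (1 + (1 - (s : LaurentSeries ℚ)) * (2 - (s : LaurentSeries ℚ)) * tVar)⁻¹) :
    (1 + tVar * (1 - (r : LaurentSeries ℚ) * tVar)⁻¹) ^ (r ^ 2) *
        (1 + (r : LaurentSeries ℚ) ^ 2 * (tVar * (1 - (r : LaurentSeries ℚ) * tVar)⁻¹))⁻¹
      = W ^ (-(4 * s)) * X ^ 2 := by
  subst hs
  have hA : 1 + (1 - ((1 + r : ℤ) : LaurentSeries ℚ)) * tVar ≠ 0 := by
    exact_mod_cast one_add_intCast_mul_tVar_ne_zero (1 - (1 + r))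
  have hB : 1 + (2 - ((1 + r : ℤ) : LaurentSeries ℚ)) * tVar ≠ 0 := by
    exact_mod_cast one_add_intCast_mul_tVar_ne_zero (2 - (1 + r))
  have hA' : 1 - (r : LaurentSeries ℚ) * tVar ≠ 0 := by
    convert hA using 1
    push_cast
    ring
  rw [zpow_neg_four_mul_mul_sq_of_sq_eq hA hB _ hW hX, one_add_mul_inv_zpow_mul_inv hA']
  push_cast
  ring_nf
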